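/- For every positive integer C, the integers x = 12C² − 6, y = 2C, z = 2C, a = 6C² + 1 and b = 24C² − 10 are all strictly greater than C and satisfy the equation 6xyz = 2ab − 3b − 10. -/

import Mathlib

/-- For every positive integer `C`, the integers `x = 12C² − 6`, `y = 2C`, `z = 2C`,
`a = 6C² + 1` and `b = 24C² − 10` are all strictly greater than `C` and satisfy
`6xyz = 2ab − 3b − 10`. -/
theorem stmt_0 (C : ℤ) (hC : 0 < C) :
    C < 12 * C ^ 2 - 6 ∧ C < 2 * C ∧ C < 2 * C ∧ C < 6 * C ^ 2 + 1 ∧ C < 24 * C ^ 2 - 10 ∧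
      6 * (12 * C ^ 2 - 6) * (2 * C) * (2 * C) =
        2 * (6 * C ^ 2 + 1) * (24 * C ^ 2 - 10) - 3 * (24 * C ^ 2 - 10) - 10 := by
  have hC' : 1 ≤ C := hC
  exact ⟨by nlinarith, by linarith, by linarith, by nlinarith, by nlinarith, by ring⟩
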